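/- arXiv:1203.0130 — 6 statements merged into one kernel-verified Lean document; each statement's English description precedes it below -/
import Mathlib

section
/- For any real numbers a, b > 0 there exist constants 0 < c < C (depending only on a and b) such that for all x, y > 0: c·|x^(a+b) − y^(a+b)| ≤ (x^a + y^a)·|x^b − y^b| ≤ C·|x^(a+b) − y^(a+b)|. -/
/-!
Assume `y ≤ x`. The upper bound is the identity
`2 (x^(a+b) - y^(a+b)) - (x^a + y^a)(x^b - y^b) = (x^a - y^a)(x^b + y^b) ≥ 0`.
For the lower bound write `x^(a+b) - y^(a+b) = x^a (x^b - y^b) + y^b (x^a - y^a)`; with `t = y / x`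
the second term is controlled by `1 - t^a ≤ max 1 (a/b) (1 - t^b)` on `(0, 1]`, which for `a > b`
is Bernoulli's inequality applied to `t^b` and the exponent `a / b`.
-/

open Real

theorem one_sub_rpow_le_mul_one_sub {s r : ℝ} (hs : 0 ≤ s) (hr : 1 ≤ r) :
    1 - s ^ r ≤ r * (1 - s) := by
  have bernoulli := one_add_mul_self_le_rpow_one_add (s := s - 1) (by linarith) hr
  rw [add_sub_cancel] at bernoulli
  linarith

theorem one_sub_rpow_le_max_mul_one_sub {t a b : ℝ} (ht : 0 < t) (ht1 : t ≤ 1) (hb : 0 < b) :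
    1 - t ^ a ≤ max 1 (a / b) * (1 - t ^ b) := by
  have htb : 0 ≤ 1 - t ^ b := sub_nonneg.mpr (rpow_le_one ht.le ht1 hb.le)
  rcases le_total a b with hab | hba
  · calc 1 - t ^ a ≤ 1 * (1 - t ^ b) := by
          linarith [rpow_le_rpow_of_exponent_ge ht ht1 hab]
      _ ≤ max 1 (a / b) * (1 - t ^ b) := by gcongr; exact le_max_left _ _
  · have hta : t ^ a = (t ^ b) ^ (a / b) := by
      rw [← rpow_mul ht.le, mul_div_cancel₀ a hb.ne']
    calc 1 - t ^ a ≤ a / b * (1 - t ^ b) := by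
          rw [hta]
          exact one_sub_rpow_le_mul_one_sub (rpow_nonneg ht.le b) ((one_le_div hb).mpr hba)
      _ ≤ max 1 (a / b) * (1 - t ^ b) := by gcongr; exact le_max_right _ _

theorem rpow_mul_rpow_sub_rpow_le_max_mul {x y a b : ℝ} (hy : 0 < y) (hxy : y ≤ x)
    (hb : 0 < b) :
    x ^ b * (x ^ a - y ^ a) ≤ max 1 (a / b) * (x ^ a * (x ^ b - y ^ b)) := by
  have hx : 0 < x := hy.trans_le hxy
  obtain ⟨t, ht, ht1, rfl⟩ : ∃ t, 0 < t ∧ t ≤ 1 ∧ y = x * t :=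
    ⟨y / x, div_pos hy hx, (div_le_one hx).mpr hxy, by field_simp⟩
  rw [mul_rpow hx.le ht.le, mul_rpow hx.le ht.le]
  have hxab : 0 ≤ x ^ a * x ^ b := by positivity
  calc x ^ b * (x ^ a - x ^ a * t ^ a) = x ^ a * x ^ b * (1 - t ^ a) := by ring
    _ ≤ x ^ a * x ^ b * (max 1 (a / b) * (1 - t ^ b)) :=
        mul_le_mul_of_nonneg_left (one_sub_rpow_le_max_mul_one_sub ht ht1 hb) hxab
    _ = max 1 (a / b) * (x ^ a * (x ^ b - x ^ b * t ^ b)) := by ring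

theorem rpow_add_sub_rpow_add_le_max_mul {x y a b : ℝ} (hy : 0 < y) (hxy : y ≤ x) (ha : 0 ≤ a)
    (hb : 0 < b) :
    x ^ (a + b) - y ^ (a + b) ≤ (1 + max 1 (a / b)) * ((x ^ a + y ^ a) * (x ^ b - y ^ b)) := by
  have hx : 0 < x := hy.trans_le hxy
  have hya : 0 ≤ y ^ a := by positivity
  have hab : y ^ a ≤ x ^ a := rpow_le_rpow hy.le hxy ha
  have hbb : y ^ b ≤ x ^ b := rpow_le_rpow hy.le hxy hb.le
  have key := rpow_mul_rpow_sub_rpow_le_max_mul (a := a) hy hxy hb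
  rw [rpow_add hx, rpow_add hy]
  calc x ^ a * x ^ b - y ^ a * y ^ b
        = x ^ a * (x ^ b - y ^ b) + y ^ b * (x ^ a - y ^ a) := by ring
    _ ≤ x ^ a * (x ^ b - y ^ b) + x ^ b * (x ^ a - y ^ a) := by gcongr
    _ ≤ (1 + max 1 (a / b)) * (x ^ a * (x ^ b - y ^ b)) := by linarith
    _ ≤ (1 + max 1 (a / b)) * ((x ^ a + y ^ a) * (x ^ b - y ^ b)) := by
        gcongr; linarith

theorem rpow_add_mul_rpow_sub_rpow_le_two_mul {x y a b : ℝ} (hy : 0 < y) (hxy : y ≤ x)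
    (ha : 0 ≤ a) :
    (x ^ a + y ^ a) * (x ^ b - y ^ b) ≤ 2 * (x ^ (a + b) - y ^ (a + b)) := by
  have hx : 0 < x := hy.trans_le hxy
  have hab : y ^ a ≤ x ^ a := rpow_le_rpow hy.le hxy ha
  have hpq : 0 ≤ x ^ b + y ^ b := by positivity
  rw [rpow_add hx, rpow_add hy]
  nlinarith [mul_nonneg (sub_nonneg.mpr hab) hpq]

/-- For any `a, b > 0` there exist constants `0 < c < C` (depending only on `a, b`)
such that for all `x, y > 0`:
`c * |x^(a+b) - y^(a+b)| ≤ (x^a + y^a) * |x^b - y^b| ≤ C * |x^(a+b) - y^(a+b)|`. -/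
theorem stmt_0 (a b : ℝ) (ha : 0 < a) (hb : 0 < b) :
    ∃ c C : ℝ, 0 < c ∧ c < C ∧
      ∀ x y : ℝ, 0 < x → 0 < y →
        c * |x ^ (a + b) - y ^ (a + b)| ≤ (x ^ a + y ^ a) * |x ^ b - y ^ b| ∧
        (x ^ a + y ^ a) * |x ^ b - y ^ b| ≤ C * |x ^ (a + b) - y ^ (a + b)| := by
  have hM : 1 ≤ max 1 (a / b) := le_max_left _ _
  refine ⟨(1 + max 1 (a / b))⁻¹, 2, by positivity, ?_, fun x y hx hy => ?_⟩
  · calc (1 + max 1 (a / b))⁻¹ ≤ 2⁻¹ := by gcongr; linarith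
      _ < 2 := by norm_num
  wlog hxy : y ≤ x generalizing x y
  · have := this y x hy hx (le_of_not_ge hxy)
    rwa [abs_sub_comm (y ^ (a + b)), abs_sub_comm (y ^ b), add_comm (y ^ a)] at this
  rw [abs_of_nonneg (sub_nonneg.mpr (rpow_le_rpow hy.le hxy (by positivity))),
    abs_of_nonneg (sub_nonneg.mpr (rpow_le_rpow hy.le hxy hb.le))]
  exact ⟨(inv_mul_le_iff₀ (by positivity)).mpr
      (rpow_add_sub_rpow_add_le_max_mul hy hxy ha.le hb),
    rpow_add_mul_rpow_sub_rpow_le_two_mul hy hxy ha.le⟩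
end

section
/- Let g be a probability measure on ℝ³ with the property that whenever v₁, v₂ belong to the support of g, the entire sphere S((v₁+v₂)/2, |v₁−v₂|/2) is contained in the support of g. If g is not a Dirac mass, then the support of g is all of ℝ³. -/
/-!
If a set `S` closed under diametral spheres contains the sphere of radius `r` about `c`, it
contains the closed ball of radius `√2 r`: a point `y` of that ball is at distance `s = r / √2`
from some `m` with `‖m - c‖ = s`, and for a unit `u ⊥ m - c` the points `m ± s u` lie on the
given sphere and have `m` as midpoint, so the sphere about `m` of radius `s`, which contains `y`,
lies in `S`. Iterating, `S` is the whole space as soon as it contains two distinct points. The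
support of a probability measure that is not a Dirac mass contains two distinct points.
-/

open MeasureTheory Metric

/-- The (topological) support of a measure on a metric space: the set of points all of whose
balls have positive measure.  This is the smallest closed set of full measure. -/
def measSupport (g : Measure (EuclideanSpace ℝ (Fin 3))) : Set (EuclideanSpace ℝ (Fin 3)) :=
  {x | ∀ r : ℝ, 0 < r → 0 < g (Metric.ball x r)}

open Module

open scoped RealInnerProductSpace

section Geometry

variable {E : Type*} [NormedAddCommGroup E] [InnerProductSpace ℝ E]

def IsClosedUnderDiametralSpheres (S : Set E) : Prop :=
  ∀ ⦃v₁ v₂ : E⦄, v₁ ∈ S → v₂ ∈ S → sphere (midpoint ℝ v₁ v₂) (dist v₁ v₂ / 2) ⊆ S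

lemma exists_norm_eq_one_inner_eq_zero [FiniteDimensional ℝ E] (hE : 2 ≤ finrank ℝ E) (v : E) :
    ∃ u : E, ‖u‖ = 1 ∧ ⟪v, u⟫ = 0 := by
  have hpos : 0 < finrank ℝ (ℝ ∙ v)ᗮ := by
    have := (ℝ ∙ v).finrank_add_finrank_orthogonal
    have := finrank_span_le_card (R := ℝ) ({v} : Set E)
    simp only [Set.toFinset_singleton, Finset.card_singleton] at this
    omega
  have : Nontrivial (ℝ ∙ v)ᗮ := Module.finrank_pos_iff.1 hpos
  obtain ⟨u, hu⟩ := exists_norm_eq (ℝ ∙ v)ᗮ zero_le_one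
  exact ⟨u, hu, Submodule.mem_orthogonal_singleton_iff_inner_right.1 u.2⟩

lemma norm_add_smul_sq_of_inner_eq_zero {x u : E} (hu : ‖u‖ = 1) (h : ⟪x, u⟫ = 0) (t : ℝ) :
    ‖x + t • u‖ ^ 2 = ‖x‖ ^ 2 + t ^ 2 := by
  rw [norm_add_sq_real, inner_smul_right, h, norm_smul, hu, Real.norm_eq_abs]
  simp

lemma exists_mem_sphere_mem_sphere_of_dist_le [FiniteDimensional ℝ E] (hE : 2 ≤ finrank ℝ E)
    {c y : E} {s : ℝ} (h : dist y c ≤ 2 * s) : ∃ m, m ∈ sphere c s ∧ m ∈ sphere y s := by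
  obtain ⟨u, hu, hyu⟩ := exists_norm_eq_one_inner_eq_zero hE (y - c)
  set t := √(s ^ 2 - ‖y - c‖ ^ 2 / 4)
  have hs : 0 ≤ s := by linarith [dist_nonneg (x := y) (y := c)]
  have ht : t ^ 2 = s ^ 2 - ‖y - c‖ ^ 2 / 4 := by
    rw [dist_eq_norm] at h
    exact Real.sq_sqrt (by nlinarith [norm_nonneg (y - c)])
  have key : ∀ ε : ℝ, ε ^ 2 = 1 → ‖(ε / 2) • (y - c) + t • u‖ = s := fun ε hε => by
    rw [← sq_eq_sq₀ (norm_nonneg _) hs, norm_add_smul_sq_of_inner_eq_zero hu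
      (by rw [inner_smul_left, hyu, mul_zero]), norm_smul, mul_pow, Real.norm_eq_abs, sq_abs,
      div_pow, hε, ht]
    ring
  refine ⟨midpoint ℝ c y + t • u, ?_, ?_⟩
  · rw [mem_sphere_iff_norm, ← key 1 (one_pow 2)]
    congr 1
    rw [midpoint_eq_smul_add, invOf_eq_inv]
    module
  · rw [mem_sphere_iff_norm, ← key (-1) (by norm_num)]
    congr 1
    rw [midpoint_eq_smul_add, invOf_eq_inv]
    module

lemma IsClosedUnderDiametralSpheres.closedBall_subset [FiniteDimensional ℝ E]
    (hE : 2 ≤ finrank ℝ E) {S : Set E} (hS : IsClosedUnderDiametralSpheres S) {c : E} {r : ℝ}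
    (h : sphere c r ⊆ S) : closedBall c (√2 * r) ⊆ S := by
  intro y hy
  have h2 : √2 * √2 = 2 := Real.mul_self_sqrt zero_le_two
  have hr : 0 ≤ r := nonneg_of_mul_nonneg_right (dist_nonneg.trans hy) (by positivity)
  set s := r / √2
  have hrs : r = √2 * s := (mul_div_cancel₀ r (by positivity)).symm
  obtain ⟨m, hmc, hmy⟩ := exists_mem_sphere_mem_sphere_of_dist_le hE (c := c) (y := y) (s := s)
    (by rw [← h2, mul_assoc, ← hrs]; exact hy)
  rw [mem_sphere_iff_norm] at hmc
  obtain ⟨u, hu, hmu⟩ := exists_norm_eq_one_inner_eq_zero hE (m - c)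
  have hs : 0 ≤ s := by positivity
  have mem_S : ∀ ε : ℝ, ε ^ 2 = 1 → m + (ε * s) • u ∈ S := fun ε hε => h <| by
    rw [mem_sphere_iff_norm, add_sub_right_comm, ← sq_eq_sq₀ (norm_nonneg _) hr,
      norm_add_smul_sq_of_inner_eq_zero hu hmu, hmc, mul_pow, hε, hrs, mul_pow,
      Real.sq_sqrt zero_le_two]
    ring
  have hsub := hS (mem_S 1 (one_pow 2)) (mem_S (-1) (by norm_num))
  have hmid : midpoint ℝ (m + (1 * s) • u) (m + (-1 * s) • u) = m := by
    rw [midpoint_eq_smul_add, invOf_eq_inv]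
    module
  have hdist : dist (m + (1 * s) • u) (m + (-1 * s) • u) / 2 = s := by
    rw [dist_eq_norm, add_sub_add_left_eq_sub, ← sub_smul, norm_smul, hu, Real.norm_eq_abs,
      abs_of_nonneg (by linarith)]
    ring
  rw [hmid, hdist] at hsub
  exact hsub (mem_sphere_comm.1 hmy)

lemma IsClosedUnderDiametralSpheres.eq_univ_of_sphere_subset [FiniteDimensional ℝ E]
    (hE : 2 ≤ finrank ℝ E) {S : Set E} (hS : IsClosedUnderDiametralSpheres S) {c : E} {r : ℝ}
    (hr : 0 < r) (h : sphere c r ⊆ S) : S = Set.univ := by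
  have grow : ∀ n : ℕ, sphere c (√2 ^ n * r) ⊆ S := by
    intro n
    induction n with
    | zero => simpa using h
    | succ n ih =>
      rw [pow_succ', mul_assoc]
      exact sphere_subset_closedBall.trans (hS.closedBall_subset hE ih)
  refine Set.eq_univ_of_forall fun x => ?_
  obtain ⟨n, hn⟩ := pow_unbounded_of_one_lt (dist x c / r) Real.one_lt_sqrt_two
  refine hS.closedBall_subset hE (grow n) (mem_closedBall.2 ?_)
  rw [div_lt_iff₀ hr] at hn
  exact hn.le.trans (le_mul_of_one_le_left (by positivity) Real.one_lt_sqrt_two.le)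

lemma IsClosedUnderDiametralSpheres.eq_univ [FiniteDimensional ℝ E] (hE : 2 ≤ finrank ℝ E)
    {S : Set E} (hS : IsClosedUnderDiametralSpheres S) {a b : E} (ha : a ∈ S) (hb : b ∈ S)
    (hab : a ≠ b) : S = Set.univ :=
  hS.eq_univ_of_sphere_subset hE (by simpa using hab) (hS ha hb)

end Geometry

lemma MeasureTheory.Measure.eq_dirac_of_support_subset_singleton {X : Type*}
    [TopologicalSpace X] [HereditarilyLindelofSpace X] [MeasurableSpace X]
    [MeasurableSingletonClass X] {μ : Measure X} [IsProbabilityMeasure μ] {a : X}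
    (h : μ.support ⊆ {a}) : μ = Measure.dirac a := by
  have hnull : μ {a}ᶜ = 0 :=
    measure_mono_null (Set.compl_subset_compl.2 h) Measure.measure_compl_support
  rw [← Measure.restrict_eq_self_of_ae_mem (measure_eq_zero_iff_ae_notMem.1 hnull |>.mono
      fun _ hx => not_not.1 hx), Measure.restrict_singleton,
    (prob_compl_eq_zero_iff (measurableSet_singleton a)).1 hnull, one_smul]

lemma measSupport_eq_support (g : Measure (EuclideanSpace ℝ (Fin 3))) :
    measSupport g = g.support := by
  ext x
  exact nhds_basis_ball.mem_measureSupport.symm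

/-- If a probability measure `g` on `ℝ³` is such that whenever `v₁, v₂` are in its support,
the whole sphere of center `(v₁+v₂)/2` and radius `‖v₁-v₂‖/2` is contained in the support,
and `g` is not a Dirac mass, then the support of `g` is all of `ℝ³`. -/
theorem stmt_1 (g : Measure (EuclideanSpace ℝ (Fin 3))) [IsProbabilityMeasure g]
    (hsphere : ∀ v₁ v₂ : EuclideanSpace ℝ (Fin 3), v₁ ∈ measSupport g → v₂ ∈ measSupport g →
      Metric.sphere ((2:ℝ)⁻¹ • (v₁ + v₂)) (‖v₁ - v₂‖ / 2) ⊆ measSupport g)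
    (hnotdirac : ¬ ∃ a : EuclideanSpace ℝ (Fin 3), g = Measure.dirac a) :
    measSupport g = Set.univ := by
  have hS : IsClosedUnderDiametralSpheres (measSupport g) := fun v₁ v₂ h₁ h₂ => by
    simpa [midpoint_eq_smul_add, dist_eq_norm] using hsphere v₁ v₂ h₁ h₂
  rw [measSupport_eq_support] at hS ⊢
  obtain ⟨a, ha⟩ := Measure.nonempty_support (IsProbabilityMeasure.ne_zero g)
  obtain ⟨b, hb, hba⟩ : ∃ b ∈ g.support, b ≠ a := by
    by_contra! h
    exact hnotdirac ⟨a, Measure.eq_dirac_of_support_subset_singleton h⟩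
  exact hS.eq_univ (by simp) hb ha hba
end

section
/- Let x ∈ ℝ³, r > 0, and let g be a probability measure on ℝ³ whose support contains the sphere S(x,r) and which satisfies: v₁, v₂ ∈ Supp g implies S((v₁+v₂)/2, |v₁−v₂|/2) ⊂ Supp g. Then the closed ball of center x and radius √2·r is contained in the support of g. -/
/-!
Put `s = r / √2`. Any `y` with `|y - x| ≤ 2s` lies on a sphere `S(m, s)` with `|m - x| = s`
(intersect two spheres of radius `s`, which needs a second dimension). Such a sphere is generated
by the two antipodal points `m ± u`, `u ⊥ m - x`, `|u| = s`, and by Pythagoras these lie on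
`S(x, √2 s) = S(x, r)`.
-/

open MeasureTheory Metric Module RealInnerProductSpace

section

variable {E : Type*} [NormedAddCommGroup E] [InnerProductSpace ℝ E]

def IsSphereStable (S : Set E) : Prop :=
  ∀ v₁ v₂ : E, v₁ ∈ S → v₂ ∈ S → sphere ((2:ℝ)⁻¹ • (v₁ + v₂)) (‖v₁ - v₂‖ / 2) ⊆ S

variable [FiniteDimensional ℝ E]

theorem exists_inner_eq_zero_norm_eq (hE : 2 ≤ finrank ℝ E) (v : E) {c : ℝ} (hc : 0 ≤ c) :
    ∃ w : E, ⟪v, w⟫ = 0 ∧ ‖w‖ = c := by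
  have hspan : finrank ℝ (ℝ ∙ v) ≤ 1 := by
    simpa using finrank_span_le_card (R := ℝ) ({v} : Set E)
  have hsum := Submodule.finrank_add_finrank_orthogonal (ℝ ∙ v)
  have : Nontrivial (ℝ ∙ v)ᗮ := Module.finrank_pos_iff (R := ℝ).mp (by omega)
  obtain ⟨w, hw⟩ := exists_norm_eq (ℝ ∙ v)ᗮ hc
  exact ⟨w, Submodule.mem_orthogonal_singleton_iff_inner_right.mp w.2, hw⟩

theorem nonempty_sphere_inter_sphere (hE : 2 ≤ finrank ℝ E) {x y : E} {s : ℝ}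
    (hxy : dist y x ≤ 2 * s) : (sphere x s ∩ sphere y s).Nonempty := by
  set a : E := (2:ℝ)⁻¹ • (y - x)
  have ha : ‖a‖ = dist y x / 2 := by
    rw [norm_smul, dist_eq_norm, norm_inv, Real.norm_two, inv_mul_eq_div]
  have hs : 0 ≤ s := by linarith [dist_nonneg (x := y) (y := x)]
  have ht : 0 ≤ s ^ 2 - ‖a‖ ^ 2 := by
    rw [ha, sub_nonneg]; exact pow_le_pow_left₀ (by positivity) (by linarith) 2
  obtain ⟨w, haw, hw⟩ := exists_inner_eq_zero_norm_eq hE a (Real.sqrt_nonneg (s ^ 2 - ‖a‖ ^ 2))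
  have hpyth : √(‖a‖ * ‖a‖ + ‖w‖ * ‖w‖) = s := by
    rw [hw, Real.mul_self_sqrt ht, ← sq, add_sub_cancel, Real.sqrt_sq hs]
  refine ⟨x + a + w, ?_, ?_⟩
  · rw [mem_sphere_iff_norm, add_sub_right_comm, add_sub_cancel_left,
      norm_add_eq_sqrt_iff_real_inner_eq_zero.mpr haw, hpyth]
  · have : y - (x + a + w) = a - w := by simp only [a]; module
    rw [mem_sphere', dist_eq_norm, this, norm_sub_eq_sqrt_iff_real_inner_eq_zero.mpr haw, hpyth]

namespace IsSphereStable

variable {S : Set E} (hS : IsSphereStable S) (hE : 2 ≤ finrank ℝ E)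
include hS hE

theorem sphere_subset {x m : E} {s : ℝ} (hx : sphere x (√2 * s) ⊆ S) (hm : m ∈ sphere x s) :
    sphere m s ⊆ S := by
  rw [mem_sphere_iff_norm] at hm
  have hs : 0 ≤ s := hm ▸ norm_nonneg _
  obtain ⟨u, hu, hun⟩ := exists_inner_eq_zero_norm_eq hE (m - x) hs
  have hpyth : √(‖m - x‖ * ‖m - x‖ + ‖u‖ * ‖u‖) = √2 * s := by
    rw [hm, hun, ← two_mul, Real.sqrt_mul zero_le_two, Real.sqrt_mul_self hs]
  have hplus : m + u ∈ S := hx <| by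
    rw [mem_sphere_iff_norm, add_sub_right_comm,
      norm_add_eq_sqrt_iff_real_inner_eq_zero.mpr hu, hpyth]
  have hminus : m - u ∈ S := hx <| by
    rw [mem_sphere_iff_norm, sub_right_comm, norm_sub_eq_sqrt_iff_real_inner_eq_zero.mpr hu, hpyth]
  have hmid : (2:ℝ)⁻¹ • ((m + u) + (m - u)) = m := by module
  have hrad : ‖(m + u) - (m - u)‖ / 2 = s := by
    rw [add_sub_sub_cancel, ← two_smul ℝ, norm_smul, hun]; norm_num
  simpa only [hmid, hrad] using hS _ _ hplus hminus

theorem closedBall_subset {x : E} {r : ℝ} (hx : sphere x r ⊆ S) :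
    closedBall x (√2 * r) ⊆ S := by
  intro y hy
  have hr : √2 * (r / √2) = r := by field_simp
  have hy' : dist y x ≤ 2 * (r / √2) := by
    rw [show (2:ℝ) * (r / √2) = √2 * r by field_simp; norm_num [mul_comm]]
    exact mem_closedBall.mp hy
  obtain ⟨m, hmx, hmy⟩ := nonempty_sphere_inter_sphere hE hy'
  exact hS.sphere_subset hE (by rwa [hr]) hmx (mem_sphere_comm.mp hmy)

end IsSphereStable

end

theorem stmt_2_general (g : Measure (EuclideanSpace ℝ (Fin 3)))
    (x : EuclideanSpace ℝ (Fin 3)) (r : ℝ)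
    (hS : Metric.sphere x r ⊆ measSupport g)
    (hsphere : ∀ v₁ v₂ : EuclideanSpace ℝ (Fin 3), v₁ ∈ measSupport g → v₂ ∈ measSupport g →
      Metric.sphere ((2:ℝ)⁻¹ • (v₁ + v₂)) (‖v₁ - v₂‖ / 2) ⊆ measSupport g) :
    Metric.closedBall x (Real.sqrt 2 * r) ⊆ measSupport g :=
  IsSphereStable.closedBall_subset hsphere (by simp) hS

/-- If the support of a probability measure `g` on `ℝ³` contains the sphere `S(x,r)` and is
stable by the operation `v₁, v₂ ∈ Supp g ⟹ S((v₁+v₂)/2, ‖v₁-v₂‖/2) ⊆ Supp g`, then the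
closed ball of center `x` and radius `√2 · r` is contained in the support of `g`. -/
theorem stmt_2 (g : Measure (EuclideanSpace ℝ (Fin 3))) [IsProbabilityMeasure g]
    (x : EuclideanSpace ℝ (Fin 3)) (r : ℝ) (hr : 0 < r)
    (hS : Metric.sphere x r ⊆ measSupport g)
    (hsphere : ∀ v₁ v₂ : EuclideanSpace ℝ (Fin 3), v₁ ∈ measSupport g → v₂ ∈ measSupport g →
      Metric.sphere ((2:ℝ)⁻¹ • (v₁ + v₂)) (‖v₁ - v₂‖ / 2) ⊆ measSupport g) :
    Metric.closedBall x (Real.sqrt 2 * r) ⊆ measSupport g :=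
  stmt_2_general g x r hS hsphere
end

section
/- For every v in the closed ball of center x ∈ ℝ³ and radius √2·r (r > 0), there exist v₁, v₂ on the sphere S(x,r) such that v lies on the sphere of center (v₁+v₂)/2 and radius |v₁−v₂|/2. Explicitly, writing v = x + α·r·σ with σ a unit vector and α ∈ [0,√2], and choosing any unit vector τ orthogonal to σ, one may take v₁ = x + r·[(α+√(2−α²))σ + (α−√(2−α²))τ]/2 and v₂ = x + r·[(α+√(2−α²))σ − (α−√(2−α²))τ]/2. -/
open Metric RealInnerProductSpace

/-! Since `(α + β)² + (α - β)² = 2 (α² + β²) = 4` when `β = √(2 - α²)`, both `v₁ - x` and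
`v₂ - x` have length `r`. Their midpoint lies on the `σ`-axis, so `v` minus it is
`(r/2)(α - β) σ`, while `v₁ - v₂ = r (α - β) τ`; as `‖σ‖ = ‖τ‖`, the two lengths agree. -/

lemma exists_norm_eq_one_eq_norm_smul {F : Type*} [NormedAddCommGroup F] [NormedSpace ℝ F]
    [Nontrivial F] (w : F) : ∃ σ : F, ‖σ‖ = 1 ∧ w = ‖w‖ • σ := by
  rcases eq_or_ne w 0 with rfl | hw
  · obtain ⟨σ, hσ⟩ := exists_norm_eq F zero_le_one
    exact ⟨σ, hσ, by simp⟩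
  · refine ⟨‖w‖⁻¹ • w, norm_smul_inv_norm hw, ?_⟩
    rw [smul_inv_smul₀ (norm_ne_zero_iff.mpr hw)]

section

variable {E : Type*} [NormedAddCommGroup E] [InnerProductSpace ℝ E]

lemma exists_norm_eq_one_inner_eq_zero_s3 [FiniteDimensional ℝ E]
    (hE : 2 ≤ Module.finrank ℝ E) (σ : E) : ∃ τ : E, ‖τ‖ = 1 ∧ ⟪σ, τ⟫ = 0 := by
  have hspan : Module.finrank ℝ (ℝ ∙ σ) ≤ 1 := by
    simpa using finrank_span_le_card ({σ} : Set E)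
  have hsum := (ℝ ∙ σ).finrank_add_finrank_orthogonal
  have : Nontrivial (ℝ ∙ σ)ᗮ := Module.nontrivial_of_finrank_pos (R := ℝ) (by lia)
  obtain ⟨τ, hτ⟩ := exists_norm_eq (ℝ ∙ σ)ᗮ zero_le_one
  exact ⟨τ, hτ, τ.prop σ (Submodule.mem_span_singleton_self σ)⟩

variable {σ τ : E}

lemma norm_smul_add_smul_of_orthonormal (hσ : ‖σ‖ = 1) (hτ : ‖τ‖ = 1) (hστ : ⟪σ, τ⟫ = 0)
    (a b : ℝ) : ‖a • σ + b • τ‖ = √(a ^ 2 + b ^ 2) := by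
  have hab : ⟪a • σ, b • τ⟫ = 0 := by simp [real_inner_smul_left, real_inner_smul_right, hστ]
  rw [← Real.sqrt_sq (norm_nonneg _), norm_add_sq_real, hab, norm_smul, norm_smul, hσ, hτ]
  simp only [Real.norm_eq_abs, mul_one, mul_zero, add_zero, sq_abs]

lemma norm_half_smul_of_orthonormal (hσ : ‖σ‖ = 1) (hτ : ‖τ‖ = 1) (hστ : ⟪σ, τ⟫ = 0)
    {a b : ℝ} (hab : a ^ 2 + b ^ 2 = 4) (r : ℝ) : ‖(r / 2) • (a • σ + b • τ)‖ = |r| := by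
  rw [norm_smul, norm_smul_add_smul_of_orthonormal hσ hτ hστ, hab,
    show (4 : ℝ) = 2 ^ 2 by norm_num, Real.sqrt_sq zero_le_two, Real.norm_eq_abs, abs_div,
    abs_two, div_mul_cancel₀ _ two_ne_zero]

end

/-- For every `v` in the closed ball of center `x ∈ ℝ³` and radius `√2 · r` (`r > 0`), there
exist `v₁, v₂` on the sphere `S(x,r)` such that `v` lies on the sphere of center `(v₁+v₂)/2`
and radius `‖v₁-v₂‖/2`.  Explicitly, writing `v = x + α·r·σ` with `σ` a unit vector and
`α ∈ [0,√2]`, and choosing a unit vector `τ` orthogonal to `σ`, one may take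
`v₁ = x + r·[(α+√(2-α²))σ + (α−√(2-α²))τ]/2` and `v₂ = x + r·[(α+√(2-α²))σ − (α−√(2-α²))τ]/2`. -/
theorem stmt_3 (x v : EuclideanSpace ℝ (Fin 3)) (r : ℝ) (hr : 0 < r)
    (hv : ‖v - x‖ ≤ Real.sqrt 2 * r) :
    ∃ (σ τ : EuclideanSpace ℝ (Fin 3)) (α : ℝ),
      ‖σ‖ = 1 ∧ ‖τ‖ = 1 ∧ ⟪σ, τ⟫ = 0 ∧ 0 ≤ α ∧ α ≤ Real.sqrt 2 ∧ v = x + (α * r) • σ ∧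
      (let β := Real.sqrt (2 - α ^ 2)
       let v₁ := x + (r / 2) • ((α + β) • σ + (α - β) • τ)
       let v₂ := x + (r / 2) • ((α + β) • σ - (α - β) • τ)
       ‖v₁ - x‖ = r ∧ ‖v₂ - x‖ = r ∧ ‖v - (2:ℝ)⁻¹ • (v₁ + v₂)‖ = ‖v₁ - v₂‖ / 2) := by
  obtain ⟨σ, hσ, hvσ⟩ := exists_norm_eq_one_eq_norm_smul (v - x)
  obtain ⟨τ, hτ, hστ⟩ := exists_norm_eq_one_inner_eq_zero_s3 (by simp) σ
  set α := ‖v - x‖ / r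
  have hα0 : 0 ≤ α := by positivity
  have hα2 : α ≤ √2 := div_le_of_le_mul₀ hr.le (by positivity) hv
  have hv' : v = x + (α * r) • σ := by
    rw [div_mul_cancel₀ _ hr.ne', ← hvσ, add_sub_cancel]
  set β := √(2 - α ^ 2)
  have hαβ : (α + β) ^ 2 + (α - β) ^ 2 = 4 := by
    have : β ^ 2 = 2 - α ^ 2 := Real.sq_sqrt (by nlinarith [Real.sq_sqrt zero_le_two])
    linear_combination 2 * this
  refine ⟨σ, τ, α, hσ, hτ, hστ, hα0, hα2, hv', ?_, ?_, ?_⟩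
  · rw [add_sub_cancel_left, norm_half_smul_of_orthonormal hσ hτ hστ hαβ, abs_of_pos hr]
  · rw [add_sub_cancel_left, sub_eq_add_neg, ← neg_smul,
      norm_half_smul_of_orthonormal hσ hτ hστ (by linear_combination hαβ), abs_of_pos hr]
  · have hmid : v - (2:ℝ)⁻¹ • ((x + (r / 2) • ((α + β) • σ + (α - β) • τ))
        + (x + (r / 2) • ((α + β) • σ - (α - β) • τ))) = ((r / 2) * (α - β)) • σ := by
      rw [hv']; module
    have hdiff : (x + (r / 2) • ((α + β) • σ + (α - β) • τ))
        - (x + (r / 2) • ((α + β) • σ - (α - β) • τ)) = (r * (α - β)) • τ := by module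
    rw [hmid, hdiff, norm_smul, norm_smul, hσ, hτ, norm_mul, norm_mul, norm_div]
    simp only [Real.norm_eq_abs, abs_two]
    ring
end

section
/- Let g ∈ C¹(ℝ^d) be a nonnegative integrable function with ∫|∇g| < ∞, satisfying: there are 0 < α < a < 1 and κ such that for all r ∈ (0,1] and |h| ≤ 1, ∫|g⋆χ_r(x+h) − g⋆χ_r(x)| dx ≤ C_d κ |h|^a r^{−α}, where χ_r = (v_d r^d)^{-1} 1_{B(0,r)}. Then sup_{0<|h|≤1} |h|^{α−a} ∫ |g(x+h) − g(x)| dx ≤ C_{d,a,α} κ. -/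
/-!
Write `I(v) = ∫ |g(x+v) - g(x)| dx` and `S = sup_{0<|v|≤1} |v|^{α-a} I(v)`, which is finite because
`I(v) ≤ |v| ∫ |∇g|` and `a - α < 1`. Averaging over a ball of radius `r` moves `g` by at most
`sup_{|y|<r} I(y) ≤ r^{a-α} S` in `L¹` (Minkowski), so splitting `g(·+v) - g` through `g⋆χ_r`
gives `|v|^{α-a} I(v) ≤ κ (|v|/r)^α + 2 (r/|v|)^{a-α} S`. With `r = c|v|`, `c = 4^{-1/(a-α)}`, the
last term is `S/2`, hence `S ≤ 2 c^{-α} κ`.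
-/

open MeasureTheory Metric

/-- `χ_r`, the normalized indicator of the open ball of radius `r` in `ℝ^d`. -/
noncomputable def chiBall (d : ℕ) (r : ℝ) (x : EuclideanSpace ℝ (Fin d)) : ℝ :=
  if ‖x‖ < r then ((volume (Metric.ball (0 : EuclideanSpace ℝ (Fin d)) 1)).toReal * r ^ d)⁻¹
  else 0

open Set Filter

namespace chiBall

variable {d : ℕ} {r : ℝ}

theorem eq_indicator (d : ℕ) (r : ℝ) :
    chiBall d r = (ball (0 : EuclideanSpace ℝ (Fin d)) r).indicator
      fun _ => ((volume (ball (0 : EuclideanSpace ℝ (Fin d)) 1)).toReal * r ^ d)⁻¹ := by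
  ext x
  simp only [chiBall, indicator, mem_ball, dist_zero_right]

theorem nonneg (x : EuclideanSpace ℝ (Fin d)) : 0 ≤ chiBall d r x := by
  unfold chiBall
  split_ifs with hx
  · have hr : 0 < r := (norm_nonneg x).trans_lt hx
    positivity
  · exact le_rfl

theorem norm_lt_of_ne_zero {y : EuclideanSpace ℝ (Fin d)} (hy : chiBall d r y ≠ 0) : ‖y‖ < r := by
  by_contra h
  exact hy (if_neg h)

theorem integrable : Integrable (chiBall d r) := by
  rw [eq_indicator, integrable_indicator_iff measurableSet_ball]
  exact integrableOn_const measure_ball_lt_top.ne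

theorem integral_eq_one (hr : 0 < r) : ∫ x, chiBall d r x = 1 := by
  have h1 : (volume (ball (0 : EuclideanSpace ℝ (Fin d)) 1)).toReal ≠ 0 :=
    (ENNReal.toReal_pos (measure_ball_pos _ _ one_pos).ne' measure_ball_lt_top.ne).ne'
  rw [eq_indicator, integral_indicator measurableSet_ball, setIntegral_const, measureReal_def,
    Measure.addHaar_ball_of_pos _ _ hr, finrank_euclideanSpace_fin, ENNReal.toReal_mul,
    ENNReal.toReal_ofReal (by positivity), smul_eq_mul]
  field_simp

end chiBall

section Translation

variable {G : Type*} [AddCommGroup G] [MeasurableSpace G] {μ : Measure G}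

theorem integral_abs_add_sub_le_of_integrable_sub [MeasurableAdd G] [μ.IsAddRightInvariant]
    {f T : G → ℝ} (hf : Integrable f μ) (hTf : Integrable (fun x => T x - f x) μ) (v : G) :
    ∫ x, |f (x + v) - f x| ∂μ ≤ ∫ x, |T (x + v) - T x| ∂μ + 2 * ∫ x, |T x - f x| ∂μ := by
  have hTf_v : Integrable (fun x => T (x + v) - f (x + v)) μ := hTf.comp_add_right v
  have hT_v : Integrable (fun x => T (x + v) - T x) μ :=
    ((hTf_v.add ((hf.comp_add_right v).sub hf)).sub hTf).congr
      (Eventually.of_forall fun x => by simp only [Pi.add_apply, Pi.sub_apply]; ring)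
  have h12 : Integrable (fun x => |T (x + v) - f (x + v)| + |T (x + v) - T x|) μ :=
    hTf_v.abs.add hT_v.abs
  calc ∫ x, |f (x + v) - f x| ∂μ
      ≤ ∫ x, (|T (x + v) - f (x + v)| + |T (x + v) - T x| + |T x - f x|) ∂μ := by
        refine integral_mono_of_nonneg (Eventually.of_forall fun x => abs_nonneg _)
          (h12.add hTf.abs) (Eventually.of_forall fun x => ?_)
        have h1 := abs_sub_le (f (x + v)) (T (x + v)) (f x)
        have h2 := abs_sub_le (T (x + v)) (T x) (f x)
        rw [abs_sub_comm (f (x + v)) (T (x + v))] at h1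
        dsimp only
        linarith
    _ = ∫ x, |T (x + v) - T x| ∂μ + 2 * ∫ x, |T x - f x| ∂μ := by
        rw [integral_add h12 hTf.abs, integral_add hTf_v.abs hT_v.abs,
          integral_add_right_eq_self (fun x => |T x - f x|) v]
        ring

theorem integral_abs_convolution_sub_le [MeasurableAdd₂ G] [MeasurableNeg G] [SFinite μ]
    [μ.IsAddLeftInvariant] [μ.IsNegInvariant]
    {g φ : G → ℝ} (hg : Integrable g μ) (hφ : Integrable φ μ) (hφ_nonneg : ∀ y, 0 ≤ φ y)
    (hφ_one : ∫ y, φ y ∂μ = 1) {B : ℝ} (hB : ∀ y, φ y ≠ 0 → ∫ x, |g (x - y) - g x| ∂μ ≤ B) :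
    ∫ x, |(∫ z, g z * φ (x - z) ∂μ) - g x| ∂μ ≤ B := by
  set F : G × G → ℝ := fun p => (g (p.2 - p.1) - g p.2) * φ p.1
  have hF_inner : ∀ y, ∫ x, ‖F (y, x)‖ ∂μ = (∫ x, |g (x - y) - g x| ∂μ) * φ y := fun y => by
    rw [← integral_mul_const]
    simp only [F, Real.norm_eq_abs, abs_mul, abs_of_nonneg (hφ_nonneg y)]
  have hF_inner_le : ∀ y, ∫ x, ‖F (y, x)‖ ∂μ ≤ B * φ y := fun y => by
    rw [hF_inner]
    rcases eq_or_ne (φ y) 0 with h0 | h0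
    · simp [h0]
    · exact mul_le_mul_of_nonneg_right (hB y h0) (hφ_nonneg y)
  have hF_meas : AEStronglyMeasurable F (μ.prod μ) :=
    ((hg.1.comp_quasiMeasurePreserving
      (quasiMeasurePreserving_sub_of_right_invariant μ μ)).prod_swap.sub hg.1.comp_snd).mul
        hφ.1.comp_fst
  have hF : Integrable F (μ.prod μ) := by
    refine (integrable_prod_iff hF_meas).2 ⟨Eventually.of_forall fun y => ?_, ?_⟩
    · show Integrable (fun x => (g (x - y) - g x) * φ y) μ
      exact ((hg.comp_sub_right y).sub hg).mul_const _
    · refine (hφ.const_mul B).mono' hF_meas.norm.integral_prod_right'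
        (Eventually.of_forall fun y => ?_)
      rw [Real.norm_of_nonneg (integral_nonneg fun _ => norm_nonneg _)]
      exact hF_inner_le y
  have hconv : ∀ᵐ x ∂μ, (∫ z, g z * φ (x - z) ∂μ) - g x = ∫ y, F (y, x) ∂μ := by
    filter_upwards [hF.prod_left_ae] with x hx
    have hswap : ∫ z, g z * φ (x - z) ∂μ = ∫ y, g (x - y) * φ y ∂μ := by
      simpa using integral_sub_left_eq_self (fun y => g (x - y) * φ y) μ x
    have hsplit : ∫ y, g (x - y) * φ y ∂μ = ∫ y, F (y, x) ∂μ + g x := by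
      rw [← mul_one (g x), ← hφ_one, ← integral_const_mul, ← integral_add hx (hφ.const_mul _)]
      simp only [F]
      congr 1; funext y; ring
    rw [hswap, hsplit, add_sub_cancel_right]
  calc ∫ x, |(∫ z, g z * φ (x - z) ∂μ) - g x| ∂μ
      ≤ ∫ x, ∫ y, ‖F (y, x)‖ ∂μ ∂μ := by
        refine integral_mono_of_nonneg (Eventually.of_forall fun _ => abs_nonneg _)
          hF.integral_norm_prod_right ?_
        filter_upwards [hconv] with x hx
        rw [hx, ← Real.norm_eq_abs]
        exact norm_integral_le_integral_norm _
    _ = ∫ y, ∫ x, ‖F (y, x)‖ ∂μ ∂μ := (integral_integral_swap hF.norm).symm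
    _ ≤ ∫ y, B * φ y ∂μ := integral_mono hF.integral_norm_prod_left (hφ.const_mul B) hF_inner_le
    _ = B := by rw [integral_const_mul, hφ_one, mul_one]

end Translation

section Gradient

variable {E : Type*} [NormedAddCommGroup E] [NormedSpace ℝ E] {g : E → ℝ}

theorem abs_add_sub_le_setIntegral_norm_fderiv (hg : ContDiff ℝ 1 g) (x h : E) :
    |g (x + h) - g x| ≤ ∫ t in Ioc (0 : ℝ) 1, ‖fderiv ℝ g (x + t • h)‖ * ‖h‖ := by
  have hline : Continuous fun t : ℝ => fderiv ℝ g (x + t • h) :=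
    (hg.continuous_fderiv one_ne_zero).comp
      (continuous_const.add (continuous_id.smul continuous_const))
  have hderiv : ∀ t ∈ uIcc (0 : ℝ) 1,
      HasDerivAt (fun t : ℝ => g (x + t • h)) (fderiv ℝ g (x + t • h) h) t := fun t _ =>
    (hg.differentiable one_ne_zero _).hasFDerivAt.comp_hasDerivAt t
      (((hasDerivAt_id t).smul_const h).const_add x |>.congr_deriv (one_smul ℝ h))
  have hftc : g (x + h) - g x = ∫ t in Ioc (0 : ℝ) 1, fderiv ℝ g (x + t • h) h := by
    rw [← intervalIntegral.integral_of_le zero_le_one,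
      intervalIntegral.integral_eq_sub_of_hasDerivAt hderiv
        ((hline.clm_apply continuous_const).intervalIntegrable 0 1)]
    simp
  rw [hftc, ← Real.norm_eq_abs]
  refine (norm_integral_le_integral_norm _).trans (integral_mono_of_nonneg
    (Eventually.of_forall fun _ => norm_nonneg _) ?_
    (Eventually.of_forall fun t => (fderiv ℝ g (x + t • h)).le_opNorm h))
  exact (hline.norm.mul continuous_const).integrableOn_Ioc

variable [MeasurableSpace E] [BorelSpace E] [SecondCountableTopology E] {μ : Measure E}
  [SFinite μ] [μ.IsAddRightInvariant]

theorem integral_abs_add_sub_le_norm_mul_integral_norm_fderiv (hg : ContDiff ℝ 1 g)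
    (hDg : Integrable (fun x => ‖fderiv ℝ g x‖) μ) (h : E) :
    ∫ x, |g (x + h) - g x| ∂μ ≤ ‖h‖ * ∫ x, ‖fderiv ℝ g x‖ ∂μ := by
  set L := ∫ x, ‖fderiv ℝ g x‖ ∂μ
  set F : ℝ × E → ℝ := fun p => ‖fderiv ℝ g (p.2 + p.1 • h)‖ * ‖h‖
  have hF_slice : ∀ t : ℝ, ∫ x, F (t, x) ∂μ = L * ‖h‖ := fun t => by
    rw [integral_mul_const, integral_add_right_eq_self (fun x => ‖fderiv ℝ g x‖) (t • h)]
  have hF_meas : AEStronglyMeasurable F ((volume.restrict (Ioc (0 : ℝ) 1)).prod μ) :=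
    (((hg.continuous_fderiv one_ne_zero).comp
      (continuous_snd.add (continuous_fst.smul continuous_const))).norm.mul
        continuous_const).aestronglyMeasurable
  have hF : Integrable F ((volume.restrict (Ioc (0 : ℝ) 1)).prod μ) := by
    refine (integrable_prod_iff hF_meas).2 ⟨Eventually.of_forall fun t => ?_, ?_⟩
    · exact (hDg.comp_add_right (t • h)).mul_const ‖h‖
    · have hslice : ∀ t : ℝ, ∫ x, ‖F (t, x)‖ ∂μ = L * ‖h‖ := fun t => by
        simpa only [Real.norm_of_nonneg (by positivity : 0 ≤ F (t, _))] using hF_slice t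
      simp only [hslice]
      exact integrableOn_const (by simp)
  calc ∫ x, |g (x + h) - g x| ∂μ
      ≤ ∫ x, (∫ t in Ioc (0 : ℝ) 1, F (t, x)) ∂μ := by
        refine integral_mono_of_nonneg (Eventually.of_forall fun _ => abs_nonneg _)
          hF.integral_prod_right (Eventually.of_forall fun x => ?_)
        exact abs_add_sub_le_setIntegral_norm_fderiv hg x h
    _ = ∫ t in Ioc (0 : ℝ) 1, ∫ x, F (t, x) ∂μ :=
        (integral_integral_swap (f := fun t x => F (t, x)) hF).symm
    _ = ‖h‖ * L := by
        simp only [hF_slice, setIntegral_const, Real.volume_real_Ioc, sub_zero,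
          max_eq_left zero_le_one]
        ring

theorem rpow_mul_integral_abs_add_sub_le_integral_norm_fderiv (hg : ContDiff ℝ 1 g)
    (hDg : Integrable (fun x => ‖fderiv ℝ g x‖) μ) {β : ℝ} (hβ : -1 ≤ β) {v : E} (hv0 : 0 < ‖v‖)
    (hv1 : ‖v‖ ≤ 1) :
    ‖v‖ ^ β * ∫ x, |g (x + v) - g x| ∂μ ≤ ∫ x, ‖fderiv ℝ g x‖ ∂μ := by
  have hL : 0 ≤ ∫ x, ‖fderiv ℝ g x‖ ∂μ := integral_nonneg fun _ => norm_nonneg _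
  calc ‖v‖ ^ β * ∫ x, |g (x + v) - g x| ∂μ
      ≤ ‖v‖ ^ β * (‖v‖ * ∫ x, ‖fderiv ℝ g x‖ ∂μ) := mul_le_mul_of_nonneg_left
        (integral_abs_add_sub_le_norm_mul_integral_norm_fderiv hg hDg v) (Real.rpow_nonneg hv0.le _)
    _ = ‖v‖ ^ (β + 1) * ∫ x, ‖fderiv ℝ g x‖ ∂μ := by rw [Real.rpow_add_one hv0.ne']; ring
    _ ≤ ∫ x, ‖fderiv ℝ g x‖ ∂μ :=
        mul_le_of_le_one_left hL (Real.rpow_le_one hv0.le hv1 (by linarith))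

end Gradient

section SelfImprovement

variable {E : Type*} [NormedAddCommGroup E] [MeasurableSpace E] {μ : Measure E} {g : E → ℝ}

theorem integral_abs_sub_sub_le_rpow_mul {α a M r : ℝ} (hαa : α < a) (hM0 : 0 ≤ M)
    (hM : ∀ y : E, 0 < ‖y‖ → ‖y‖ ≤ 1 → ‖y‖ ^ (α - a) * ∫ x, |g (x + y) - g x| ∂μ ≤ M)
    (hr1 : r ≤ 1) {y : E} (hyr : ‖y‖ < r) :
    ∫ x, |g (x - y) - g x| ∂μ ≤ r ^ (a - α) * M := by
  rcases eq_or_ne y 0 with rfl | hy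
  · simpa using mul_nonneg (Real.rpow_nonneg ((norm_nonneg _).trans hyr.le) _) hM0
  have hy0 : 0 < ‖y‖ := norm_pos_iff.2 hy
  have hmod := hM (-y) (by rwa [norm_neg]) (by rw [norm_neg]; linarith)
  simp_rw [norm_neg, ← sub_eq_add_neg] at hmod
  calc ∫ x, |g (x - y) - g x| ∂μ
      = ‖y‖ ^ (a - α) * (‖y‖ ^ (α - a) * ∫ x, |g (x - y) - g x| ∂μ) := by
        rw [← mul_assoc, ← Real.rpow_add hy0, sub_add_sub_cancel', sub_self, Real.rpow_zero,
          one_mul]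
    _ ≤ r ^ (a - α) * M :=
        mul_le_mul (Real.rpow_le_rpow hy0.le hyr.le (sub_pos.2 hαa).le) hmod
          (mul_nonneg (Real.rpow_nonneg hy0.le _) (integral_nonneg fun _ => abs_nonneg _))
          (Real.rpow_nonneg (hy0.trans hyr).le _)

theorem le_two_mul_of_le_add_half_ciSup {ι : Sort*} {f : ι → ℝ} {K : ℝ}
    (hf : BddAbove (range f)) (h : ∀ i, f i ≤ K + (⨆ j, f j) / 2) (i : ι) : f i ≤ 2 * K := by
  have : Nonempty ι := ⟨i⟩
  have hsup : ⨆ j, f j ≤ K + (⨆ j, f j) / 2 := ciSup_le h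
  linarith [le_ciSup hf i]

end SelfImprovement

section Smoothing

variable {d : ℕ} {g : EuclideanSpace ℝ (Fin d) → ℝ} {α a κ M : ℝ}

theorem integral_abs_chiBall_convolution_sub_le (hg : Integrable g) (hαa : α < a) (hM0 : 0 ≤ M)
    (hM : ∀ y : EuclideanSpace ℝ (Fin d), 0 < ‖y‖ → ‖y‖ ≤ 1 →
      ‖y‖ ^ (α - a) * ∫ x, |g (x + y) - g x| ≤ M)
    {r : ℝ} (hr0 : 0 < r) (hr1 : r ≤ 1) :
    ∫ x, |(∫ z, g z * chiBall d r (x - z)) - g x| ≤ r ^ (a - α) * M :=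
  integral_abs_convolution_sub_le hg chiBall.integrable chiBall.nonneg
    (chiBall.integral_eq_one hr0) fun _ hy =>
      integral_abs_sub_sub_le_rpow_mul hαa hM0 hM hr1 (chiBall.norm_lt_of_ne_zero hy)

theorem rpow_mul_integral_abs_add_sub_le_of_chiBall_smoothing (hg : Integrable g) (hαa : α < a)
    (hsmooth : ∀ (r : ℝ), 0 < r → r ≤ 1 → ∀ h : EuclideanSpace ℝ (Fin d), ‖h‖ ≤ 1 →
      ∫ x, |(∫ z, g z * chiBall d r (x + h - z)) - ∫ z, g z * chiBall d r (x - z)|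
        ≤ κ * ‖h‖ ^ a * r ^ (-α))
    (hM : ∀ y : EuclideanSpace ℝ (Fin d), 0 < ‖y‖ → ‖y‖ ≤ 1 →
      ‖y‖ ^ (α - a) * ∫ x, |g (x + y) - g x| ≤ M)
    {c : ℝ} (hc0 : 0 < c) (hc1 : c ≤ 1) {v : EuclideanSpace ℝ (Fin d)} (hv0 : 0 < ‖v‖)
    (hv1 : ‖v‖ ≤ 1) :
    ‖v‖ ^ (α - a) * ∫ x, |g (x + v) - g x| ≤ κ * c ^ (-α) + 2 * c ^ (a - α) * M := by
  have hM0 : 0 ≤ M := (mul_nonneg (Real.rpow_nonneg hv0.le _)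
    (integral_nonneg fun _ => abs_nonneg _)).trans (hM v hv0 hv1)
  set r := c * ‖v‖
  have hr0 : 0 < r := mul_pos hc0 hv0
  have hr1 : r ≤ 1 := mul_le_one₀ hc1 hv0.le hv1
  have hTg : Integrable (fun x => (∫ z, g z * chiBall d r (x - z)) - g x) :=
    (hg.integrable_convolution (ContinuousLinearMap.mul ℝ ℝ) chiBall.integrable).sub hg
  have hmod : ∫ x, |g (x + v) - g x| ≤ κ * ‖v‖ ^ a * r ^ (-α) + 2 * (r ^ (a - α) * M) :=
    (integral_abs_add_sub_le_of_integrable_sub hg hTg v).trans (add_le_add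
      (hsmooth r hr0 hr1 v hv1)
      (by gcongr; exact integral_abs_chiBall_convolution_sub_le hg hαa hM0 hM hr0 hr1))
  have hpow1 : ‖v‖ ^ (α - a) * (‖v‖ ^ a * ‖v‖ ^ (-α)) = 1 := by
    rw [← Real.rpow_add hv0, ← Real.rpow_add hv0, show α - a + (a + -α) = 0 by ring,
      Real.rpow_zero]
  have hpow2 : ‖v‖ ^ (α - a) * ‖v‖ ^ (a - α) = 1 := by
    rw [← Real.rpow_add hv0, show α - a + (a - α) = 0 by ring, Real.rpow_zero]
  calc ‖v‖ ^ (α - a) * ∫ x, |g (x + v) - g x|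
      ≤ ‖v‖ ^ (α - a) * (κ * ‖v‖ ^ a * r ^ (-α) + 2 * (r ^ (a - α) * M)) :=
        mul_le_mul_of_nonneg_left hmod (Real.rpow_nonneg hv0.le _)
    _ = κ * c ^ (-α) * (‖v‖ ^ (α - a) * (‖v‖ ^ a * ‖v‖ ^ (-α)))
          + 2 * c ^ (a - α) * M * (‖v‖ ^ (α - a) * ‖v‖ ^ (a - α)) := by
        rw [Real.mul_rpow hc0.le hv0.le, Real.mul_rpow hc0.le hv0.le]; ring
    _ = κ * c ^ (-α) + 2 * c ^ (a - α) * M := by rw [hpow1, hpow2, mul_one, mul_one]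

end Smoothing

/-- Let `g ∈ C¹(ℝ^d)` be nonnegative and integrable with integrable gradient, and suppose
`∫ |g⋆χ_r(x+h) − g⋆χ_r(x)| dx ≤ κ |h|^a r^{−α}` for all `r ∈ (0,1]` and `|h| ≤ 1`,
where `0 < α < a < 1`.  Then `sup_{0<|h|≤1} |h|^{α−a} ∫ |g(x+h) − g(x)| dx ≤ C_{d,a,α} κ`. -/
theorem stmt_9 (d : ℕ) (α a : ℝ) (hα : 0 < α) (hαa : α < a) (ha : a < 1) :
    ∃ C : ℝ, 0 < C ∧
      ∀ (g : EuclideanSpace ℝ (Fin d) → ℝ) (κ : ℝ), 0 ≤ κ →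
        ContDiff ℝ 1 g → (∀ x, 0 ≤ g x) → Integrable g →
        Integrable (fun x => ‖fderiv ℝ g x‖) →
        (∀ (r : ℝ), 0 < r → r ≤ 1 → ∀ h : EuclideanSpace ℝ (Fin d), ‖h‖ ≤ 1 →
          ∫ x : EuclideanSpace ℝ (Fin d),
              |(∫ z, g z * chiBall d r (x + h - z)) - ∫ z, g z * chiBall d r (x - z)|
            ≤ κ * ‖h‖ ^ a * r ^ (-α)) →
        ∀ h : EuclideanSpace ℝ (Fin d), 0 < ‖h‖ → ‖h‖ ≤ 1 →
          ‖h‖ ^ (α - a) * ∫ x, |g (x + h) - g x| ≤ C * κ := by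
  have haα : 0 < a - α := sub_pos.2 hαa
  set c : ℝ := 4 ^ (-(a - α)⁻¹)
  have hc1 : c ≤ 1 :=
    Real.rpow_le_one_of_one_le_of_nonpos (by norm_num) (neg_nonpos.2 (inv_nonneg.2 haα.le))
  have hc : 2 * c ^ (a - α) = 1 / 2 := by
    rw [← Real.rpow_mul (by norm_num), neg_mul, inv_mul_cancel₀ haα.ne', Real.rpow_neg_one]
    norm_num
  refine ⟨2 * c ^ (-α), by positivity, fun g κ _ hg _ hgi hDg hsmooth h hh0 hh1 => ?_⟩
  let F : {v : EuclideanSpace ℝ (Fin d) // 0 < ‖v‖ ∧ ‖v‖ ≤ 1} → ℝ :=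
    fun v => ‖(v : EuclideanSpace ℝ (Fin d))‖ ^ (α - a) * ∫ x, |g (x + v) - g x|
  have hF : BddAbove (range F) := ⟨_, forall_mem_range.2 fun v =>
    rpow_mul_integral_abs_add_sub_le_integral_norm_fderiv hg hDg (by linarith) v.2.1 v.2.2⟩
  have hF_improve : ∀ v, F v ≤ κ * c ^ (-α) + (⨆ w, F w) / 2 := fun v => by
    have := rpow_mul_integral_abs_add_sub_le_of_chiBall_smoothing hgi hαa hsmooth
      (fun y hy0 hy1 => le_ciSup hF ⟨y, hy0, hy1⟩) (by positivity) hc1 v.2.1 v.2.2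
    rwa [hc, one_div_mul_eq_div] at this
  calc ‖h‖ ^ (α - a) * ∫ x, |g (x + h) - g x|
      ≤ 2 * (κ * c ^ (-α)) := le_two_mul_of_le_add_half_ciSup hF hF_improve ⟨h, hh0, hh1⟩
    _ = 2 * c ^ (-α) * κ := by ring
end

section
/- With Γ(X,φ) = cos φ · I(X) + sin φ · J(X), where (X/|X|, I(X)/|X|, J(X)/|X|) is an orthonormal basis of ℝ³ (and I(0)=J(0)=0): for any measurable non-negative function F: ℝ → ℝ and any X, ξ ∈ ℝ³, ∫₀^{2π} F(⟨ξ, Γ(X,φ)⟩) dφ = ∫₀^{2π} F(⟨X, Γ(ξ,φ)⟩) dφ. In particular, the left-hand side is independent of the choice of orthonormal completion (I(X), J(X)). -/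
/-!
Expanding the inner product, `⟪ξ, Γ(X,φ)⟫ = a cos φ + b sin φ` with `a = ⟪ξ, I X⟫`,
`b = ⟪ξ, J X⟫`, which is `√(a² + b²) cos (φ - θ)`; by `2π`-periodicity the integral only depends
on `a² + b²`. Parseval in the orthonormal frame `(X, I X, J X) / ‖X‖` gives
`a² + b² = ‖X‖² ‖ξ‖² - ⟪X, ξ⟫²`, which is symmetric in `X` and `ξ`.
-/

open MeasureTheory RealInnerProductSpace Real
open scoped ENNReal

theorem Function.Periodic.setLIntegral_Ioc_comp_sub {T : ℝ} (hT : 0 < T) {g : ℝ → ℝ≥0∞}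
    (hg : Function.Periodic g T) (θ : ℝ) :
    ∫⁻ φ in Set.Ioc 0 T, g (φ - θ) = ∫⁻ φ in Set.Ioc 0 T, g φ := by
  have hshift : ∫⁻ φ in Set.Ioc 0 T, g (φ - θ) = ∫⁻ φ in Set.Ioc (-θ) (-θ + T), g φ := by
    rw [(measurePreserving_sub_right volume θ).setLIntegral_comp_emb
      (MeasurableEquiv.subRight θ).measurableEmbedding, Set.image_sub_const_Ioc, zero_sub,
      sub_eq_neg_add]
  have : VAddInvariantMeasure (AddSubgroup.zmultiples T) ℝ volume :=
    ⟨fun c s _ => measure_preimage_add _ _ _⟩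
  rw [hshift, show Set.Ioc 0 T = Set.Ioc 0 (0 + T) by rw [zero_add]]
  exact (isAddFundamentalDomain_Ioc hT (-θ)).setLIntegral_eq (isAddFundamentalDomain_Ioc hT 0)
    g hg.map_vadd_zmultiples

theorem setLIntegral_Ioc_comp_mul_cos_add_mul_sin (g : ℝ → ℝ≥0∞) (a b : ℝ) :
    ∫⁻ φ in Set.Ioc 0 (2 * π), g (a * cos φ + b * sin φ)
      = ∫⁻ φ in Set.Ioc 0 (2 * π), g (√(a ^ 2 + b ^ 2) * cos φ) := by
  set z : ℂ := ⟨a, b⟩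
  have hnorm : √(a ^ 2 + b ^ 2) = ‖z‖ := by
    rw [Complex.norm_def, Complex.normSq_mk, sq, sq]
  have hpolar : ∀ φ, a * cos φ + b * sin φ = ‖z‖ * cos (φ - z.arg) := by
    intro φ
    have ha : ‖z‖ * cos z.arg = a := Complex.norm_mul_cos_arg z
    have hb : ‖z‖ * sin z.arg = b := Complex.norm_mul_sin_arg z
    rw [cos_sub]
    linear_combination -cos φ * ha - sin φ * hb
  simp_rw [hpolar, hnorm]
  exact Function.Periodic.setLIntegral_Ioc_comp_sub (g := fun t => g (‖z‖ * cos t)) two_pi_pos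
    (fun φ => by simp only [cos_add_two_pi]) z.arg

variable {E : Type*} [NormedAddCommGroup E] [InnerProductSpace ℝ E]

theorem Orthonormal.sum_sq_inner_left_of_card_eq_finrank [FiniteDimensional ℝ E] {ι : Type*}
    [Fintype ι] {e : ι → E} (he : Orthonormal ℝ e) (hcard : Fintype.card ι = Module.finrank ℝ E)
    (x : E) : ∑ i, ⟪x, e i⟫ ^ 2 = ‖x‖ ^ 2 := by
  simpa using (OrthonormalBasis.mk he
    (he.linearIndependent.span_eq_top_of_card_eq_finrank' hcard).ge).sum_sq_inner_left x

theorem inner_sq_add_inner_sq_of_orthogonal_frame (hE : Module.finrank ℝ E = 3) {Y u v : E}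
    (hYu : ⟪Y, u⟫ = 0) (hYv : ⟪Y, v⟫ = 0) (huv : ⟪u, v⟫ = 0) (hu : ‖u‖ = ‖Y‖) (hv : ‖v‖ = ‖Y‖)
    (Z : E) : ⟪Z, u⟫ ^ 2 + ⟪Z, v⟫ ^ 2 = ‖Y‖ ^ 2 * ‖Z‖ ^ 2 - ⟪Z, Y⟫ ^ 2 := by
  rcases eq_or_ne Y 0 with rfl | hY
  · simp [norm_eq_zero.mp (hu.trans norm_zero), norm_eq_zero.mp (hv.trans norm_zero)]
  have : FiniteDimensional ℝ E := Module.finite_of_finrank_eq_succ hE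
  have hr : ‖Y‖ ≠ 0 := norm_ne_zero_iff.mpr hY
  have he : Orthonormal ℝ (‖Y‖⁻¹ • ![Y, u, v]) := by
    rw [orthonormal_iff_ite]
    intro i j
    fin_cases i <;> fin_cases j <;>
      simp [real_inner_smul_left, real_inner_smul_right, norm_smul, hu, hv, hYu, hYv, huv,
        real_inner_comm Y, real_inner_comm u, hr]
  have parseval := he.sum_sq_inner_left_of_card_eq_finrank (by simp [hE]) Z
  simp only [Fin.sum_univ_three, Pi.smul_apply, Matrix.cons_val, real_inner_smul_right,
    mul_pow] at parseval
  field_simp at parseval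
  linear_combination parseval

theorem inner_smul_add_smul_right (Z u v : E) (c s : ℝ) :
    ⟪Z, c • u + s • v⟫ = ⟪Z, u⟫ * c + ⟪Z, v⟫ * s := by
  rw [inner_add_right, real_inner_smul_right, real_inner_smul_right, mul_comm c, mul_comm s]

theorem stmt_14_general (I J : EuclideanSpace ℝ (Fin 3) → EuclideanSpace ℝ (Fin 3))
    (hIorth : ∀ X, ⟪X, I X⟫ = 0) (hJorth : ∀ X, ⟪X, J X⟫ = 0)
    (hIJ : ∀ X, ⟪I X, J X⟫ = 0)
    (hInorm : ∀ X, ‖I X‖ = ‖X‖) (hJnorm : ∀ X, ‖J X‖ = ‖X‖)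
    (F : ℝ → ℝ)
    (X ξ : EuclideanSpace ℝ (Fin 3)) :
    ∫⁻ φ in Set.Ioc (0 : ℝ) (2 * Real.pi),
        ENNReal.ofReal (F ⟪ξ, Real.cos φ • I X + Real.sin φ • J X⟫)
      = ∫⁻ φ in Set.Ioc (0 : ℝ) (2 * Real.pi),
        ENNReal.ofReal (F ⟪X, Real.cos φ • I ξ + Real.sin φ • J ξ⟫) := by
  have frame (Y Z : EuclideanSpace ℝ (Fin 3)) :
      ⟪Z, I Y⟫ ^ 2 + ⟪Z, J Y⟫ ^ 2 = ‖Y‖ ^ 2 * ‖Z‖ ^ 2 - ⟪Z, Y⟫ ^ 2 :=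
    inner_sq_add_inner_sq_of_orthogonal_frame finrank_euclideanSpace_fin (hIorth Y) (hJorth Y)
      (hIJ Y) (hInorm Y) (hJnorm Y) Z
  simp_rw [inner_smul_add_smul_right]
  rw [setLIntegral_Ioc_comp_mul_cos_add_mul_sin (fun t => ENNReal.ofReal (F t)),
    setLIntegral_Ioc_comp_mul_cos_add_mul_sin (fun t => ENNReal.ofReal (F t)), frame, frame,
    real_inner_comm, mul_comm (‖X‖ ^ 2)]

/-- With `Γ(X,φ) = cos φ · I(X) + sin φ · J(X)`, `(X/|X|, I(X)/|X|, J(X)/|X|)` an orthonormal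
basis of `ℝ³` (`I(0)=J(0)=0`): for any measurable non-negative `F : ℝ → ℝ` and any
`X, ξ ∈ ℝ³`, `∫₀^{2π} F(⟨ξ, Γ(X,φ)⟩) dφ = ∫₀^{2π} F(⟨X, Γ(ξ,φ)⟩) dφ`. -/
theorem stmt_14 (I J : EuclideanSpace ℝ (Fin 3) → EuclideanSpace ℝ (Fin 3))
    (hI0 : I 0 = 0) (hJ0 : J 0 = 0)
    (hIorth : ∀ X, ⟪X, I X⟫ = 0) (hJorth : ∀ X, ⟪X, J X⟫ = 0)
    (hIJ : ∀ X, ⟪I X, J X⟫ = 0)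
    (hInorm : ∀ X, ‖I X‖ = ‖X‖) (hJnorm : ∀ X, ‖J X‖ = ‖X‖)
    (F : ℝ → ℝ) (hF : Measurable F) (hF0 : ∀ t, 0 ≤ F t)
    (X ξ : EuclideanSpace ℝ (Fin 3)) :
    ∫⁻ φ in Set.Ioc (0 : ℝ) (2 * Real.pi),
        ENNReal.ofReal (F ⟪ξ, Real.cos φ • I X + Real.sin φ • J X⟫)
      = ∫⁻ φ in Set.Ioc (0 : ℝ) (2 * Real.pi),
        ENNReal.ofReal (F ⟪X, Real.cos φ • I ξ + Real.sin φ • J ξ⟫) :=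
  stmt_14_general I J hIorth hJorth hIJ hInorm hJnorm F X ξ
end
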